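/- arXiv:1412.1964 — 2 statements merged into one kernel-verified Lean document; each statement's English description precedes it below -/
import Mathlib

section
/- For T ≥ 0, the list-size exponent of the scaled-ML decoder dominates its error exponent plus T: min over (Q̃, Q) with Q_Y = Q̃_Y and f(Q) ≥ f(Q̃) + T of {D(Q̃_{Y|X}||W|P_X) + I(Q) − R} ≥ min over (Q̃, Q) with Q_Y = Q̃_Y of {D(Q̃_{Y|X}||W|P_X) + I(Q) − R + T}. (The proof uses the constraint f(Q) ≥ f(Q̃) + T, the identity D(Q̃_{Y|X}||W|P_X) + I(Q) = D(Q_{Y|X}||W|P_X) + I(Q̃) + f(Q) − f(Q̃), and relabeling Q ↔ Q̃.) -/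
/-!
Splitting every logarithm into entropy-like pieces and using that `Q` and `Q̃` share both
marginals gives `D(Q̃) + I(Q) = D(Q) + I(Q̃) + f(Q) - f(Q̃)`. So a feasible pair `(Q̃, Q)` of
the left-hand problem, where `f(Q) - f(Q̃) ≥ T`, yields the feasible pair `(Q, Q̃)` of the
right-hand problem whose objective is no larger.
-/

open scoped BigOperators

noncomputable section

variable {X Y : Type*}

/-- A probability distribution on a finite set. -/
def IsDist {Z : Type*} [Fintype Z] (q : Z → ℝ) : Prop :=
  (∀ z, 0 ≤ q z) ∧ ∑ z, q z = 1

/-- X-marginal of a joint distribution. -/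
def margX [Fintype Y] (q : X × Y → ℝ) (x : X) : ℝ := ∑ y, q (x, y)

/-- Y-marginal of a joint distribution. -/
def margY [Fintype X] (q : X × Y → ℝ) (y : Y) : ℝ := ∑ x, q (x, y)

/-- f(Q) = Σ Q(x,y) log W(y|x). -/
def flik [Fintype X] [Fintype Y] (W : X → Y → ℝ) (q : X × Y → ℝ) : ℝ :=
  ∑ z : X × Y, q z * Real.log (W z.1 z.2)

/-- Conditional divergence D(Q_{Y|X} ‖ W | P_X) = Σ Q(x,y) log(Q(x,y)/(P(x)W(y|x))). -/
def condDiv [Fintype X] [Fintype Y] (W : X → Y → ℝ) (P : X → ℝ) (q : X × Y → ℝ) : ℝ :=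
  ∑ z : X × Y, q z * Real.log (q z / (P z.1 * W z.1 z.2))

/-- Mutual information I(Q) = Σ Q(x,y) log(Q(x,y)/(Q_X(x)Q_Y(y))). -/
def mutInf [Fintype X] [Fintype Y] (q : X × Y → ℝ) : ℝ :=
  ∑ z : X × Y, q z * Real.log (q z / (margX q z.1 * margY q z.2))

/-- Optimal output-threshold function g*(Q_Y, E), as an extended real
(`⊤` when the constraint set is empty). -/
def gstar [Fintype X] [Fintype Y] (W : X → Y → ℝ) (P : X → ℝ) (qY : Y → ℝ) (E : ℝ) : EReal :=
  sInf {v : EReal | ∃ q : X × Y → ℝ, IsDist q ∧ margX q = P ∧ margY q = qY ∧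
    condDiv W P q ≤ E ∧ v = (flik W q : EReal)}

lemma mul_log_div_mul_eq {a b c : ℝ} (hb : a ≠ 0 → b ≠ 0) (hc : a ≠ 0 → c ≠ 0) :
    a * Real.log (a / (b * c)) = a * Real.log a - a * Real.log b - a * Real.log c := by
  rcases eq_or_ne a 0 with rfl | ha
  · simp
  · rw [Real.log_div ha (mul_ne_zero (hb ha) (hc ha)), Real.log_mul (hb ha) (hc ha)]
    ring

lemma margX_pos [Fintype Y] {q : X × Y → ℝ} (hq : ∀ z, 0 ≤ q z) {z : X × Y} (hz : q z ≠ 0) :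
    0 < margX q z.1 :=
  ((hq z).lt_of_ne' hz).trans_le <|
    Finset.single_le_sum (f := fun y => q (z.1, y)) (fun _ _ => hq _) (Finset.mem_univ z.2)

lemma margY_pos [Fintype X] {q : X × Y → ℝ} (hq : ∀ z, 0 ≤ q z) {z : X × Y} (hz : q z ≠ 0) :
    0 < margY q z.2 :=
  ((hq z).lt_of_ne' hz).trans_le <|
    Finset.single_le_sum (f := fun x => q (x, z.2)) (fun _ _ => hq _) (Finset.mem_univ z.1)

section Decomposition

variable [Fintype X] [Fintype Y]

lemma sum_mul_fst_eq_sum_margX (q : X × Y → ℝ) (g : X → ℝ) :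
    ∑ z : X × Y, q z * g z.1 = ∑ x, margX q x * g x := by
  simp only [Fintype.sum_prod_type, margX, Finset.sum_mul]

lemma sum_mul_snd_eq_sum_margY (q : X × Y → ℝ) (g : Y → ℝ) :
    ∑ z : X × Y, q z * g z.2 = ∑ y, margY q y * g y := by
  simp only [Fintype.sum_prod_type_right, margY, Finset.sum_mul]

lemma condDiv_eq {W : X → Y → ℝ} (hW : ∀ x y, 0 < W x y) {P : X → ℝ} {q : X × Y → ℝ}
    (hq : ∀ z, 0 ≤ q z) (hXq : margX q = P) :
    condDiv W P q = ∑ z : X × Y, q z * Real.log (q z)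
      - ∑ x, P x * Real.log (P x) - flik W q := by
  subst hXq
  rw [← sum_mul_fst_eq_sum_margX q fun x => Real.log (margX q x), condDiv, flik,
    ← Finset.sum_sub_distrib, ← Finset.sum_sub_distrib]
  exact Finset.sum_congr rfl fun z _ =>
    mul_log_div_mul_eq (fun hz => (margX_pos hq hz).ne') fun _ => (hW z.1 z.2).ne'

lemma mutInf_eq {P : X → ℝ} {q : X × Y → ℝ} (hq : ∀ z, 0 ≤ q z) (hXq : margX q = P) :
    mutInf q = ∑ z : X × Y, q z * Real.log (q z)
      - ∑ x, P x * Real.log (P x) - ∑ y, margY q y * Real.log (margY q y) := by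
  subst hXq
  rw [← sum_mul_fst_eq_sum_margX q fun x => Real.log (margX q x),
    ← sum_mul_snd_eq_sum_margY q fun y => Real.log (margY q y), mutInf,
    ← Finset.sum_sub_distrib, ← Finset.sum_sub_distrib]
  exact Finset.sum_congr rfl fun z _ =>
    mul_log_div_mul_eq (fun hz => (margX_pos hq hz).ne') fun hz => (margY_pos hq hz).ne'

theorem condDiv_add_mutInf_swap {W : X → Y → ℝ} (hW : ∀ x y, 0 < W x y) {P : X → ℝ}
    {qt q : X × Y → ℝ} (hqt : ∀ z, 0 ≤ qt z) (hq : ∀ z, 0 ≤ q z)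
    (hXqt : margX qt = P) (hXq : margX q = P) (hY : margY q = margY qt) :
    condDiv W P qt + mutInf q = condDiv W P q + mutInf qt + flik W q - flik W qt := by
  rw [condDiv_eq hW hqt hXqt, condDiv_eq hW hq hXq, mutInf_eq hq hXq, mutInf_eq hqt hXqt, hY]
  ring

end Decomposition

theorem list_exponent_dominates_error_plus_T_general
    [Fintype X] [Fintype Y] (W : X → Y → ℝ) (P : X → ℝ)
    (hW : ∀ x y, 0 < W x y) (R T : ℝ) :
    sInf {v : EReal | ∃ qt q : X × Y → ℝ, IsDist qt ∧ IsDist q ∧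
        margX qt = P ∧ margX q = P ∧ margY q = margY qt ∧
        flik W qt + T ≤ flik W q ∧
        v = ((condDiv W P qt + mutInf q - R : ℝ) : EReal)}
      ≥ sInf {v : EReal | ∃ qt q : X × Y → ℝ, IsDist qt ∧ IsDist q ∧
        margX qt = P ∧ margX q = P ∧ margY q = margY qt ∧
        v = ((condDiv W P qt + mutInf q - R + T : ℝ) : EReal)} := by
  refine le_sInf fun v hv => ?_
  obtain ⟨qt, q, hqt, hq, hXqt, hXq, hY, hflik, rfl⟩ := hv
  have hswap := condDiv_add_mutInf_swap hW hqt.1 hq.1 hXqt hXq hY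
  refine sInf_le_of_le ⟨q, qt, hq, hqt, hXq, hXqt, hY.symm, rfl⟩ ?_
  exact EReal.coe_le_coe_iff.mpr (by linarith)

theorem list_exponent_dominates_error_plus_T
    [Fintype X] [Fintype Y] (W : X → Y → ℝ) (P : X → ℝ)
    (hW : ∀ x y, 0 < W x y) (hP : IsDist P) (R T : ℝ) (hR : 0 ≤ R) (hT : 0 ≤ T) :
    sInf {v : EReal | ∃ qt q : X × Y → ℝ, IsDist qt ∧ IsDist q ∧
        margX qt = P ∧ margX q = P ∧ margY q = margY qt ∧
        flik W qt + T ≤ flik W q ∧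
        v = ((condDiv W P qt + mutInf q - R : ℝ) : EReal)}
      ≥ sInf {v : EReal | ∃ qt q : X × Y → ℝ, IsDist qt ∧ IsDist q ∧
        margX qt = P ∧ margX q = P ∧ margY q = margY qt ∧
        v = ((condDiv W P qt + mutInf q - R + T : ℝ) : EReal)} :=
  list_exponent_dominates_error_plus_T_general W P hW R T
end
end

section
/- For a sequence of events A₁, …, A_M that are pairwise independent and identically distributed with common probability p, the probability of their union satisfies min(Mp, 1)/4 ≤ P(∪ₘ Aₘ) ≤ min(Mp, 1). In particular, if M = e^{nR} and p ≐ e^{-nI} exponentially, then P(∪ₘ Aₘ) ≐ e^{-n[I−R]₊}. -/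
/-!
Upper bound: the union bound, capped at `1`. Lower bound: the degree-two Bonferroni inequality
`∑ P(Aᵢ) - ½ ∑_{i ≠ j} P(Aᵢ ∩ Aⱼ) ≤ P(⋃ Aᵢ)`, applied to `K` of the events, gives
`Kp - K(K-1)p²/2 ≥ Kp/2` as soon as `Kp ≤ 1`. Taking `K = min(M, ⌊1/p⌋)` makes `2Kp ≥ min(Mp, 1)`.
-/

open MeasureTheory

theorem Finset.sum_offDiag_insert {α β : Type*} [DecidableEq α] [AddCommMonoid β]
    {s : Finset α} {a : α} (ha : a ∉ s) (f : α × α → β) :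
    ∑ x ∈ (insert a s).offDiag, f x = ∑ x ∈ s.offDiag, f x + ∑ i ∈ s, (f (a, i) + f (i, a)) := by
  rw [offDiag_insert ha, sum_union, sum_union, sum_add_distrib, add_assoc]
  · simp
  · grind [disjoint_left]
  · grind [disjoint_left]

section Bonferroni

variable {Ω ι : Type*} [MeasurableSpace Ω] {μ : Measure Ω} [IsFiniteMeasure μ] {A : ι → Set Ω}

theorem two_mul_sum_measureReal_le_measureReal_biUnion_add_sum_offDiag [DecidableEq ι]
    (hA : ∀ i, NullMeasurableSet (A i) μ) (s : Finset ι) :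
    2 * ∑ i ∈ s, μ.real (A i) ≤
      2 * μ.real (⋃ i ∈ s, A i) + ∑ x ∈ s.offDiag, μ.real (A x.1 ∩ A x.2) := by
  induction s using Finset.induction_on with
  | empty => simp
  | @insert a s ha ih =>
    set U := ⋃ i ∈ s, A i
    have h_union : μ.real (A a ∪ U) + μ.real (A a ∩ U) = μ.real (A a) + μ.real U :=
      measureReal_union_add_inter₀' (hA a) (measure_ne_top _ _) (measure_ne_top _ _)
    have h_inter : μ.real (A a ∩ U) ≤ ∑ i ∈ s, μ.real (A a ∩ A i) := by
      rw [Set.inter_iUnion₂]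
      exact measureReal_biUnion_finset_le s _
    have h_offDiag : ∑ x ∈ (insert a s).offDiag, μ.real (A x.1 ∩ A x.2) =
        ∑ x ∈ s.offDiag, μ.real (A x.1 ∩ A x.2) + 2 * ∑ i ∈ s, μ.real (A a ∩ A i) := by
      simp only [Finset.sum_offDiag_insert ha, Set.inter_comm (A _) (A a), ← two_mul,
        Finset.mul_sum]
    rw [Finset.sum_insert ha, Finset.set_biUnion_insert, h_offDiag]
    linarith

theorem card_mul_sub_le_measureReal_biUnion (hA : ∀ i, NullMeasurableSet (A i) μ)
    (s : Finset ι) {p q : ℝ} (hp : ∀ i ∈ s, μ.real (A i) = p)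
    (hq : ∀ i ∈ s, ∀ j ∈ s, i ≠ j → μ.real (A i ∩ A j) = q) :
    s.card * p - s.card * (s.card - 1) * q / 2 ≤ μ.real (⋃ i ∈ s, A i) := by
  classical
  have h := two_mul_sum_measureReal_le_measureReal_biUnion_add_sum_offDiag hA s
  have h_offDiag : ∑ x ∈ s.offDiag, μ.real (A x.1 ∩ A x.2) = ∑ x ∈ s.offDiag, q :=
    Finset.sum_congr rfl fun x hx ↦ by
      obtain ⟨hi, hj, hij⟩ := Finset.mem_offDiag.1 hx
      exact hq _ hi _ hj hij
  rw [Finset.sum_congr rfl hp, h_offDiag] at h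
  simp only [Finset.sum_const, Finset.offDiag_card, nsmul_eq_mul] at h
  rw [Nat.cast_sub (Nat.le_mul_self _), Nat.cast_mul] at h
  linarith

end Bonferroni

theorem exists_le_mul_le_one_and_min_le_two_mul {p : ℝ} (hp0 : 0 ≤ p) (hp1 : p ≤ 1) (M : ℕ) :
    ∃ K ≤ M, K * p ≤ 1 ∧ min (M * p) 1 ≤ 2 * (K * p) := by
  rcases le_total ((M : ℝ) * p) 1 with hMp | hMp
  · exact ⟨M, le_rfl, hMp, by nlinarith [min_le_left ((M : ℝ) * p) 1, M.cast_nonneg (α := ℝ)]⟩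
  have hp : 0 < p := by
    by_contra! h
    nlinarith [M.cast_nonneg (α := ℝ)]
  refine ⟨⌊1 / p⌋₊, ?_, ?_, ?_⟩
  · have h : (⌊1 / p⌋₊ : ℝ) ≤ M :=
      (Nat.floor_le (by positivity)).trans ((div_le_iff₀ hp).2 (by linarith))
    exact_mod_cast h
  · exact (le_div_iff₀ hp).1 (Nat.floor_le (by positivity))
  · -- `1 ≤ ⌊1/p⌋` and `1 < (⌊1/p⌋ + 1) p`, so `2 ⌊1/p⌋ p ≥ ⌊1/p⌋ p + p > 1`.
    have h_one : (1 : ℝ) ≤ ⌊1 / p⌋₊ := by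
      exact_mod_cast Nat.one_le_floor_iff _ |>.2 ((one_le_div hp).2 hp1)
    have h_lt : 1 < ((⌊1 / p⌋₊ : ℝ) + 1) * p := (div_lt_iff₀ hp).1 (Nat.lt_floor_add_one _)
    nlinarith [min_le_right ((M : ℝ) * p) 1]

theorem mul_div_two_le_mul_sub_mul_mul_sq {K p : ℝ} (hK : 0 ≤ K) (hp : 0 ≤ p) (hKp : K * p ≤ 1) :
    K * p / 2 ≤ K * p - K * (K - 1) * p ^ 2 / 2 := by
  nlinarith [mul_nonneg (mul_nonneg hK hp) (sub_nonneg.2 hKp), mul_nonneg hK (sq_nonneg p)]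

theorem union_bound_pairwise_independent_general
    {Ω : Type*} [MeasurableSpace Ω] (μ : Measure Ω) [IsProbabilityMeasure μ]
    (M : ℕ) (A : Fin M → Set Ω) (hA : ∀ i, MeasurableSet (A i))
    (p : ℝ) (hp0 : 0 ≤ p) (hp1 : p ≤ 1)
    (hprob : ∀ i, μ (A i) = ENNReal.ofReal p)
    (hpair : ∀ i j, i ≠ j → μ (A i ∩ A j) = ENNReal.ofReal (p ^ 2)) :
    ENNReal.ofReal (min ((M : ℝ) * p) 1 / 4) ≤ μ (⋃ i, A i) ∧
    μ (⋃ i, A i) ≤ ENNReal.ofReal (min ((M : ℝ) * p) 1) := by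
  have hprob_real (i) : μ.real (A i) = p := by simp [measureReal_def, hprob, hp0]
  have hpair_real (i j) (hij : i ≠ j) : μ.real (A i ∩ A j) = p ^ 2 := by
    simp [measureReal_def, hpair i j hij, hp0]
  constructor
  · rw [ENNReal.ofReal_le_iff_le_toReal (measure_ne_top _ _)]
    obtain ⟨K, hKM, hKp, hmin⟩ := exists_le_mul_le_one_and_min_le_two_mul hp0 hp1 M
    obtain ⟨s, -, rfl⟩ := Finset.exists_subset_card_eq (s := (Finset.univ : Finset (Fin M)))
      (by simpa using hKM)
    calc min ((M : ℝ) * p) 1 / 4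
        ≤ s.card * p / 2 := by linarith
      _ ≤ s.card * p - s.card * (s.card - 1) * p ^ 2 / 2 :=
        mul_div_two_le_mul_sub_mul_mul_sq s.card.cast_nonneg hp0 hKp
      _ ≤ μ.real (⋃ i ∈ s, A i) :=
        card_mul_sub_le_measureReal_biUnion (fun i ↦ (hA i).nullMeasurableSet) s
          (fun i _ ↦ hprob_real i) (fun i _ j _ ↦ hpair_real i j)
      _ ≤ μ.real (⋃ i, A i) := measureReal_mono (Set.iUnion₂_subset_iUnion _ _)
  · rw [ENNReal.le_ofReal_iff_toReal_le (measure_ne_top _ _) (by positivity)]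
    rw [← measureReal_def]
    refine le_min ?_ measureReal_le_one
    simpa [hprob_real] using measureReal_iUnion_fintype_le (μ := μ) A

theorem union_bound_pairwise_independent
    {Ω : Type*} [MeasurableSpace Ω] (μ : Measure Ω) [IsProbabilityMeasure μ]
    (M : ℕ) (hM : 0 < M) (A : Fin M → Set Ω) (hA : ∀ i, MeasurableSet (A i))
    (p : ℝ) (hp0 : 0 ≤ p) (hp1 : p ≤ 1)
    (hprob : ∀ i, μ (A i) = ENNReal.ofReal p)
    (hpair : ∀ i j, i ≠ j → μ (A i ∩ A j) = ENNReal.ofReal (p ^ 2)) :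
    ENNReal.ofReal (min ((M : ℝ) * p) 1 / 4) ≤ μ (⋃ i, A i) ∧
    μ (⋃ i, A i) ≤ ENNReal.ofReal (min ((M : ℝ) * p) 1) :=
  union_bound_pairwise_independent_general μ M A hA p hp0 hp1 hprob hpair
end
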